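/- arXiv:1909.08298 — 3 statements merged into one kernel-verified Lean document; each statement's English description precedes it below -/
import Mathlib

section
/- Let Λ(ξ) = |ξ| - |ξ|³ and Φ₊₊(ξ,η) = -Λ(ξ) + Λ(ξ-η) + Λ(η). If ξ, η, ξ-η are nonzero and (ξ-η)·η < 0, then Φ₊₊(ξ,η) = -(1/2)·min(|ξ-η|,|η|)·(3|ξ|² + 3·max(|ξ-η|²,|η|²) + min(|ξ-η|²,|η|²) - 4). -/
noncomputable def Lam (ξ : ℝ) : ℝ := |ξ| - |ξ|^3

noncomputable def Phipp (ξ η : ℝ) : ℝ := -Lam ξ + Lam (ξ - η) + Lam η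

/-!
When `ξ - η` and `η` have opposite signs, `|ξ|` is the difference of `|ξ - η|` and `|η|`, so
all three absolute values are polynomials in `m = min |ξ - η| |η|` and `M = max |ξ - η| |η|`.
The phase is then `2m - 2m³ - 3M²m + 3Mm²`, which factors as claimed. The phase is symmetric
under `η ↦ ξ - η`, so it suffices to treat the case `|ξ - η| ≤ |η|`.
-/

lemma abs_add_eq_abs_sub_abs_of_mul_nonpos {α : Type*} [CommRing α] [LinearOrder α]
    [IsStrictOrderedRing α] {a b : α} (h : a * b ≤ 0) (hle : |a| ≤ |b|) :
    |a + b| = |b| - |a| := by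
  rcases mul_nonpos_iff.mp h with ⟨ha, hb⟩ | ⟨ha, hb⟩
  · rw [abs_of_nonneg ha, abs_of_nonpos hb] at hle ⊢
    rw [abs_of_nonpos (by linarith)]
    abel
  · rw [abs_of_nonpos ha, abs_of_nonneg hb] at hle ⊢
    rw [abs_of_nonneg (by linarith)]
    abel

lemma Phipp_sub_right (ξ η : ℝ) : Phipp ξ (ξ - η) = Phipp ξ η := by
  rw [Phipp, Phipp, sub_sub_cancel, add_right_comm]

lemma Phipp_eq_of_abs_sub_le {ξ η : ℝ} (h : (ξ - η) * η ≤ 0) (hle : |ξ - η| ≤ |η|) :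
    Phipp ξ η = -(1/2) * |ξ - η| * (3 * |ξ|^2 + 3 * |η|^2 + |ξ - η|^2 - 4) := by
  have hξ : |ξ| = |η| - |ξ - η| := by
    simpa only [sub_add_cancel] using abs_add_eq_abs_sub_abs_of_mul_nonpos h hle
  rw [Phipp, Lam, Lam, Lam, hξ]
  ring

theorem phase_pp_neg_general (ξ η : ℝ)
    (h : (ξ - η) * η < 0) :
    Phipp ξ η = -(1/2) * min |ξ - η| |η| *
      (3 * |ξ|^2 + 3 * max (|ξ - η|^2) (|η|^2) + min (|ξ - η|^2) (|η|^2) - 4) := by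
  rcases le_total |ξ - η| |η| with hle | hle
  · have hsq := pow_le_pow_left₀ (abs_nonneg _) hle 2
    rw [min_eq_left hle, max_eq_right hsq, min_eq_left hsq]
    exact Phipp_eq_of_abs_sub_le h.le hle
  · have hsq := pow_le_pow_left₀ (abs_nonneg _) hle 2
    rw [min_eq_right hle, max_eq_left hsq, min_eq_right hsq, ← Phipp_sub_right]
    have h' : (ξ - (ξ - η)) * (ξ - η) ≤ 0 := by rw [sub_sub_cancel, mul_comm]; exact h.le
    simpa only [sub_sub_cancel] using Phipp_eq_of_abs_sub_le h' (by rwa [sub_sub_cancel])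

theorem phase_pp_neg (ξ η : ℝ) (hξ : ξ ≠ 0) (hη : η ≠ 0) (hne : ξ ≠ η)
    (h : (ξ - η) * η < 0) :
    Phipp ξ η = -(1/2) * min |ξ - η| |η| *
      (3 * |ξ|^2 + 3 * max (|ξ - η|^2) (|η|^2) + min (|ξ - η|^2) (|η|^2) - 4) :=
  phase_pp_neg_general ξ η h
end

section
/- Let Λ(ξ) = |ξ| - |ξ|³ and Φ₋₋(ξ,η) = -Λ(ξ) - Λ(ξ-η) - Λ(η). If ξ, η, ξ-η are nonzero and (ξ-η)·η < 0, then Φ₋₋(ξ,η) = (1/2)·max(|ξ-η|,|η|)·(3|ξ|² + 3·min(|ξ-η|²,|η|²) + max(|ξ-η|²,|η|²) - 4). -/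
noncomputable def Phimm (ξ η : ℝ) : ℝ := -Lam ξ - Lam (ξ - η) - Lam η

/-!
Writing `p = |ξ - η|` and `q = |η|`, the sign condition makes `ξ = (ξ - η) + η` a sum of two
numbers of opposite signs, so `|ξ| = |p - q|`. Since `Λ` is even, `Φ₋₋(ξ, η)` is then a cubic
polynomial in `p` and `q` alone, and for `q ≤ p` it factors as `p/2 · (3(p - q)² + 3q² + p² - 4)`.
-/

theorem abs_add_eq_abs_abs_sub_abs_of_mul_nonpos {a b : ℝ} (h : a * b ≤ 0) :
    |a + b| = |(|a| - |b|)| := by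
  have hab : |a| * |b| = -(a * b) := by rw [← abs_mul, abs_of_nonpos h]
  rw [← sq_eq_sq_iff_abs_eq_abs, sub_sq, sq_abs, sq_abs, mul_assoc, hab]
  ring

theorem Lam_abs (x : ℝ) : Lam |x| = Lam x := by
  simp only [Lam, abs_abs]

theorem Lam_of_nonneg {x : ℝ} (hx : 0 ≤ x) : Lam x = x - x ^ 3 := by
  rw [Lam, abs_of_nonneg hx]

theorem neg_Lam_sub_sub_Lam_sub_Lam_of_le {p q : ℝ} (hq : 0 ≤ q) (hqp : q ≤ p) :
    -Lam (p - q) - Lam p - Lam q = (1/2) * p * (3 * (p - q) ^ 2 + 3 * q ^ 2 + p ^ 2 - 4) := by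
  rw [Lam_of_nonneg (sub_nonneg.mpr hqp), Lam_of_nonneg (hq.trans hqp), Lam_of_nonneg hq]
  ring

theorem neg_Lam_sub_sub_Lam_sub_Lam {p q : ℝ} (hp : 0 ≤ p) (hq : 0 ≤ q) :
    -Lam (p - q) - Lam p - Lam q = (1/2) * max p q *
      (3 * (p - q) ^ 2 + 3 * min (p ^ 2) (q ^ 2) + max (p ^ 2) (q ^ 2) - 4) := by
  rcases le_total q p with hqp | hpq
  · have hsq : q ^ 2 ≤ p ^ 2 := pow_le_pow_left₀ hq hqp 2
    rw [max_eq_left hqp, min_eq_right hsq, max_eq_left hsq]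
    exact neg_Lam_sub_sub_Lam_sub_Lam_of_le hq hqp
  · have hsq : p ^ 2 ≤ q ^ 2 := pow_le_pow_left₀ hp hpq 2
    rw [max_eq_right hpq, min_eq_left hsq, max_eq_right hsq, ← Lam_abs, abs_sub_comm, Lam_abs,
      ← neg_sq, neg_sub]
    linear_combination neg_Lam_sub_sub_Lam_sub_Lam_of_le hp hpq

theorem phase_mm_neg_general (ξ η : ℝ) (h : (ξ - η) * η < 0) :
    Phimm ξ η = (1/2) * max |ξ - η| |η| *
      (3 * |ξ|^2 + 3 * min (|ξ - η|^2) (|η|^2) + max (|ξ - η|^2) (|η|^2) - 4) := by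
  have hξ : |ξ| = |(|ξ - η| - |η|)| := by
    simpa only [sub_add_cancel] using abs_add_eq_abs_abs_sub_abs_of_mul_nonpos h.le
  rw [Phimm, ← Lam_abs ξ, ← Lam_abs (ξ - η), ← Lam_abs η, hξ, Lam_abs, sq_abs (|ξ - η| - |η|)]
  exact neg_Lam_sub_sub_Lam_sub_Lam (abs_nonneg _) (abs_nonneg _)

theorem phase_mm_neg (ξ η : ℝ) (hξ : ξ ≠ 0) (hη : η ≠ 0) (hne : ξ ≠ η)
    (h : (ξ - η) * η < 0) :
    Phimm ξ η = (1/2) * max |ξ - η| |η| *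
      (3 * |ξ|^2 + 3 * min (|ξ - η|^2) (|η|^2) + max (|ξ - η|^2) (|η|^2) - 4) :=
  phase_mm_neg_general ξ η h
end

section
/- Let Λ_ε(ξ) = |ξ| - ε|ξ|³ for ε > 0 and Φᵉ₊₋(ξ,η) = -Λ_ε(ξ) + Λ_ε(ξ-η) - Λ_ε(η). If ξ, η, ξ-η are nonzero and ξ·η > 0, then Φᵉ₊₋(ξ,η) = (1/2)·min(|ξ|,|η|)·(3ε|ξ-η|² + 3ε·max(|ξ|²,|η|²) + ε·min(|ξ|²,|η|²) - 4). -/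
/-! When `ξ` and `η` have the same sign, `|ξ - η| = ||ξ| - |η||`, so, `Λ_ε` being even, the phase
only depends on `|ξ|` and `|η|`. It is also symmetric in `ξ` and `η`, and for `0 ≤ a ≤ b` the
identity is a polynomial one in `a` and `b`. -/

noncomputable def LamE (ε ξ : ℝ) : ℝ := |ξ| - ε * |ξ|^3

noncomputable def PhiEpm (ε ξ η : ℝ) : ℝ := -LamE ε ξ + LamE ε (ξ - η) - LamE ε η

theorem abs_abs_sub_abs_of_mul_nonneg {α : Type*} [Ring α] [LinearOrder α] [IsStrictOrderedRing α]
    {a b : α} (h : 0 ≤ a * b) : |(|a| - |b|)| = |a - b| := by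
  rcases mul_nonneg_iff.mp h with ⟨ha, hb⟩ | ⟨ha, hb⟩
  · rw [abs_of_nonneg ha, abs_of_nonneg hb]
  · rw [abs_of_nonpos ha, abs_of_nonpos hb, neg_sub_neg, abs_sub_comm]

theorem LamE_abs (ε ξ : ℝ) : LamE ε |ξ| = LamE ε ξ := by
  simp only [LamE, abs_abs]

theorem PhiEpm_comm (ε ξ η : ℝ) : PhiEpm ε ξ η = PhiEpm ε η ξ := by
  simp only [PhiEpm, ← LamE_abs ε (ξ - η), ← LamE_abs ε (η - ξ), abs_sub_comm]
  ring

theorem PhiEpm_abs_abs {ε ξ η : ℝ} (h : 0 ≤ ξ * η) : PhiEpm ε |ξ| |η| = PhiEpm ε ξ η := by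
  rw [PhiEpm, PhiEpm, LamE_abs, LamE_abs, ← LamE_abs ε (|ξ| - |η|),
    abs_abs_sub_abs_of_mul_nonneg h, LamE_abs]

theorem PhiEpm_of_nonneg_of_le {ε a b : ℝ} (ha : 0 ≤ a) (hab : a ≤ b) :
    PhiEpm ε a b = (1/2) * a * (3 * ε * (b - a)^2 + 3 * ε * b^2 + ε * a^2 - 4) := by
  rw [PhiEpm, LamE, LamE, LamE, abs_of_nonneg ha, abs_of_nonneg (ha.trans hab),
    abs_of_nonpos (sub_nonpos.mpr hab)]
  ring

theorem PhiEpm_of_nonneg {ε a b : ℝ} (ha : 0 ≤ a) (hb : 0 ≤ b) :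
    PhiEpm ε a b = (1/2) * min a b *
      (3 * ε * |a - b|^2 + 3 * ε * max (a^2) (b^2) + ε * min (a^2) (b^2) - 4) := by
  rw [sq_abs]
  rcases le_total a b with hab | hba
  · have hsq : a^2 ≤ b^2 := pow_le_pow_left₀ ha hab 2
    rw [min_eq_left hab, max_eq_right hsq, min_eq_left hsq, PhiEpm_of_nonneg_of_le ha hab]
    ring
  · have hsq : b^2 ≤ a^2 := pow_le_pow_left₀ hb hba 2
    rw [min_eq_right hba, max_eq_left hsq, min_eq_right hsq, PhiEpm_comm,
      PhiEpm_of_nonneg_of_le hb hba]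

theorem phaseE_pm_pos_general (ε ξ η : ℝ) (h : ξ * η > 0) :
    PhiEpm ε ξ η = (1/2) * min |ξ| |η| *
      (3 * ε * |ξ - η|^2 + 3 * ε * max (|ξ|^2) (|η|^2) + ε * min (|ξ|^2) (|η|^2) - 4) := by
  rw [← PhiEpm_abs_abs h.le, ← abs_abs_sub_abs_of_mul_nonneg h.le]
  exact PhiEpm_of_nonneg (abs_nonneg ξ) (abs_nonneg η)

theorem phaseE_pm_pos (ε ξ η : ℝ) (hε : 0 < ε) (hξ : ξ ≠ 0) (hη : η ≠ 0)
    (hne : ξ ≠ η) (h : ξ * η > 0) :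
    PhiEpm ε ξ η = (1/2) * min |ξ| |η| *
      (3 * ε * |ξ - η|^2 + 3 * ε * max (|ξ|^2) (|η|^2) + ε * min (|ξ|^2) (|η|^2) - 4) :=
  phaseE_pm_pos_general ε ξ η h
end
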